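/- arXiv:0811.2583 — 3 statements merged into one kernel-verified Lean document; each statement's English description precedes it below -/
import Mathlib

section
/- Let α ∈ (1,2) and δ ∈ [0,1], and set g(T) = T^{1/α}·(log log T)^{δ−1/α} for T > e^e. Let f : [0,1] → ℝ be absolutely continuous with f(0) = 0 and derivative f′ ∈ L²[0,1]. Let (T_k)_{k≥1} be an increasing sequence with T₁ > e^e such that g is nondecreasing on [T₁, ∞). Then for every function x : [0,∞) → ℝ and every k, inf_{T∈[T_k, T_{k+1}]} sup_{s∈[0,1]} | x(Ts) − f(s)·g(T) | ≥ sup_{s∈[0,1]} | x(T_k s) − f(s)·g(T_k) | − ‖f‖_∞·( g(T_{k+1}) − g(T_k) ) − ‖f′‖_{L²}·(1 − T_k/T_{k+1})^{1/2}·g(T_k), where ‖f‖_∞ = sup_{s∈[0,1]}|f(s)| and ‖f′‖_{L²} = (∫₀¹ f′(t)² dt)^{1/2}. -/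
open MeasureTheory Filter Set

/-!
Fix `T ∈ [T_k, T_{k+1}]` and `s ∈ [0,1]`. The point `s' = s T_k / T` satisfies `T s' = T_k s`, so
`x(T_k s) - f(s) g(T_k)` differs from `x(T s') - f(s') g(T)` by
`f(s') (g(T) - g(T_k)) + (f(s') - f(s)) g(T_k)`. The first term is at most `‖f‖_∞ (g(T_{k+1}) - g(T_k))`
by monotonicity of `g`; by Cauchy–Schwarz, `|f(s) - f(s')| ≤ ‖f'‖_{L²} (s - s')^{1/2}`, and
`s - s' ≤ 1 - T_k / T_{k+1}`.
-/

theorem abs_intervalIntegral_le_sqrt_setIntegral_sq_mul_sqrt {S : Set ℝ} {φ : ℝ → ℝ}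
    (hφ : MemLp φ 2 (volume.restrict S)) {a b : ℝ} (hab : a ≤ b) (hS : Ioc a b ⊆ S) :
    |∫ u in a..b, φ u| ≤ Real.sqrt (∫ t in S, φ t ^ 2) * Real.sqrt (b - a) := by
  have hφ' : MemLp φ (ENNReal.ofReal 2) (volume.restrict (Ioc a b)) := by
    rw [ENNReal.ofReal_ofNat]
    exact hφ.mono_measure (Measure.restrict_mono hS le_rfl)
  have hnorm_rpow : ∀ y : ℝ, ‖y‖ ^ (2:ℝ) = y ^ 2 := fun y => by
    rw [Real.rpow_two, Real.norm_eq_abs, sq_abs]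
  calc |∫ u in a..b, φ u| = |∫ u in Ioc a b, φ u| := by
        rw [intervalIntegral.integral_of_le hab]
    _ ≤ ∫ u in Ioc a b, ‖φ u‖ * ‖(1:ℝ)‖ := by
        simpa using norm_integral_le_integral_norm φ
    _ ≤ (∫ u in Ioc a b, ‖φ u‖ ^ (2:ℝ)) ^ (1/(2:ℝ)) *
        (∫ _ in Ioc a b, ‖(1:ℝ)‖ ^ (2:ℝ)) ^ (1/(2:ℝ)) :=
        integral_mul_norm_le_Lp_mul_Lq Real.HolderConjugate.two_two hφ' (memLp_const 1)
    _ = Real.sqrt (∫ u in Ioc a b, φ u ^ 2) * Real.sqrt (b - a) := by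
        simp only [hnorm_rpow, one_pow, integral_const, smul_eq_mul, mul_one,
          measureReal_restrict_apply_univ, Real.volume_real_Ioc_of_le hab, ← Real.sqrt_eq_rpow]
    _ ≤ Real.sqrt (∫ t in S, φ t ^ 2) * Real.sqrt (b - a) :=
        mul_le_mul_of_nonneg_right (Real.sqrt_le_sqrt (setIntegral_mono_set hφ.integrable_sq
          (Eventually.of_forall fun _ => sq_nonneg _) hS.eventuallyLE)) (Real.sqrt_nonneg _)

theorem abs_sub_le_of_eq_intervalIntegral {f φ : ℝ → ℝ}
    (hφ : MemLp φ 2 (volume.restrict (Icc 0 1)))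
    (hf : ∀ s ∈ Icc (0:ℝ) 1, f s = ∫ u in (0:ℝ)..s, φ u) {a b : ℝ}
    (ha : 0 ≤ a) (hab : a ≤ b) (hb : b ≤ 1) :
    |f b - f a| ≤ Real.sqrt (∫ t in Icc (0:ℝ) 1, φ t ^ 2) * Real.sqrt (b - a) := by
  have hφ_int : IntegrableOn φ (Icc 0 1) := hφ.integrable one_le_two
  have hint : ∀ c ∈ Icc (0:ℝ) 1, IntervalIntegrable φ volume 0 c := fun c hc =>
    (hφ_int.mono_set (by rw [uIcc_of_le hc.1]; exact Icc_subset_Icc le_rfl hc.2)).intervalIntegrable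
  have ha1 : a ∈ Icc (0:ℝ) 1 := ⟨ha, hab.trans hb⟩
  have hb1 : b ∈ Icc (0:ℝ) 1 := ⟨ha.trans hab, hb⟩
  rw [hf b hb1, hf a ha1, intervalIntegral.integral_interval_sub_left (hint b hb1) (hint a ha1)]
  exact abs_intervalIntegral_le_sqrt_setIntegral_sq_mul_sqrt hφ hab
    (Ioc_subset_Icc_self.trans (Icc_subset_Icc ha hb))

theorem abs_le_of_eq_intervalIntegral {f φ : ℝ → ℝ}
    (hφ : MemLp φ 2 (volume.restrict (Icc 0 1)))
    (hf : ∀ s ∈ Icc (0:ℝ) 1, f s = ∫ u in (0:ℝ)..s, φ u) {s : ℝ} (hs : s ∈ Icc (0:ℝ) 1) :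
    |f s| ≤ Real.sqrt (∫ t in Icc (0:ℝ) 1, φ t ^ 2) := by
  have hf0 : f 0 = 0 := by simp [hf 0 (left_mem_Icc.2 zero_le_one)]
  simpa [hf0] using (abs_sub_le_of_eq_intervalIntegral hφ hf le_rfl hs.1 hs.2).trans
    (mul_le_of_le_one_right (Real.sqrt_nonneg _) (Real.sqrt_le_one.2 (by linarith [hs.2])))

theorem rpow_mul_log_log_rpow_nonneg {t : ℝ} (ht : Real.exp 1 ≤ t) (p q : ℝ) :
    0 ≤ t ^ p * Real.log (Real.log t) ^ q := by
  have hlog : 1 ≤ Real.log t := by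
    rw [← Real.log_exp 1]
    exact Real.log_le_log (Real.exp_pos 1) ht
  exact mul_nonneg (Real.rpow_nonneg ((Real.exp_pos 1).le.trans ht) p)
    (Real.rpow_nonneg (Real.log_nonneg hlog) q)

theorem exists_mul_eq_mul_of_le_of_le {a t b s : ℝ} (ha : 0 < a) (hat : a ≤ t) (htb : t ≤ b)
    (hs0 : 0 ≤ s) (hs1 : s ≤ 1) :
    ∃ s', 0 ≤ s' ∧ s' ≤ s ∧ t * s' = a * s ∧ s - s' ≤ 1 - a / b := by
  have ht : 0 < t := ha.trans_le hat
  have hat' : a / t ≤ 1 := div_le_one_of_le₀ hat ht.le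
  refine ⟨s * (a / t), by positivity, mul_le_of_le_one_right hs0 hat', by field_simp, ?_⟩
  have : a / b ≤ a / t := by gcongr
  nlinarith [mul_nonneg (sub_nonneg.2 hs1) (sub_nonneg.2 hat')]

theorem abs_sub_mul_le_of_le {y c d u v w C D : ℝ} (hu : 0 ≤ u) (huv : u ≤ v) (hvw : v ≤ w)
    (hd : |d| ≤ C) (hcd : |c - d| ≤ D) :
    |y - c * u| ≤ |y - d * v| + C * (w - u) + D * u := by
  have hC : 0 ≤ C := (abs_nonneg d).trans hd
  calc |y - c * u| = |(y - d * v) + d * (v - u) + (d - c) * u| := by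
        congr 1; ring
    _ ≤ |y - d * v| + |d| * (v - u) + |c - d| * u := by
        refine (abs_add_three _ _ _).trans_eq ?_
        rw [abs_mul, abs_mul, abs_sub_comm d, abs_of_nonneg (sub_nonneg.2 huv), abs_of_nonneg hu]
    _ ≤ |y - d * v| + C * (w - u) + D * u := by
        gcongr

theorem ENNReal.iSup_ofReal_tsub_tsub_le {ι κ : Sort*} {F : ι → ℝ} {G : κ → ℝ} {a b : ℝ}
    (h : ∀ i, ∃ j, F i ≤ G j + a + b) :
    (⨆ i, ENNReal.ofReal (F i)) - ENNReal.ofReal a - ENNReal.ofReal b ≤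
      ⨆ j, ENNReal.ofReal (G j) := by
  rw [tsub_le_iff_right, tsub_le_iff_right]
  refine iSup_le fun i => ?_
  obtain ⟨j, hj⟩ := h i
  calc ENNReal.ofReal (F i) ≤ ENNReal.ofReal (G j + a + b) := ENNReal.ofReal_le_ofReal hj
    _ ≤ ENNReal.ofReal (G j + a) + ENNReal.ofReal b := ENNReal.ofReal_add_le
    _ ≤ ENNReal.ofReal (G j) + ENNReal.ofReal a + ENNReal.ofReal b := by
        gcongr; exact ENNReal.ofReal_add_le
    _ ≤ (⨆ j, ENNReal.ofReal (G j)) + ENNReal.ofReal b + ENNReal.ofReal a := by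
        rw [add_right_comm]
        gcongr
        exact le_iSup (fun j => ENNReal.ofReal (G j)) j

theorem interpolation_infimum_lower_bound_general
    (α : ℝ) (δ : ℝ)
    (g : ℝ → ℝ) (hg : g = fun T => T ^ (1/α) * (Real.log (Real.log T)) ^ (δ - 1/α))
    (fd : ℝ → ℝ) (hfd : MemLp fd 2 (volume.restrict (Icc (0:ℝ) 1)))
    (f : ℝ → ℝ) (hf : ∀ s ∈ Icc (0:ℝ) 1, f s = ∫ u in (0:ℝ)..s, fd u)
    (T : ℕ → ℝ) (hT : StrictMono T) (hT1 : Real.exp (Real.exp 1) < T 1)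
    (hgmono : MonotoneOn g (Ici (T 1)))
    (x : ℝ → ℝ) (k : ℕ) (hk : 1 ≤ k) :
    (⨆ s : Icc (0:ℝ) 1, ENNReal.ofReal |x (T k * s.1) - f s.1 * g (T k)|) -
        ENNReal.ofReal ((⨆ s : Icc (0:ℝ) 1, |f s.1|) * (g (T (k+1)) - g (T k))) -
        ENNReal.ofReal (Real.sqrt (∫ t in Icc (0:ℝ) 1, fd t ^ 2) *
          Real.sqrt (1 - T k / T (k+1)) * g (T k)) ≤
      ⨅ Tt : Icc (T k) (T (k+1)), ⨆ s : Icc (0:ℝ) 1,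
        ENNReal.ofReal |x (Tt.1 * s.1) - f s.1 * g Tt.1| := by
  have hT1k : T 1 ≤ T k := hT.monotone hk
  have hT1k1 : T 1 ≤ T (k+1) := hT1k.trans (hT.monotone k.le_succ)
  have hgTk : 0 ≤ g (T k) := hg ▸ rpow_mul_log_log_rpow_nonneg
    ((Real.exp_le_exp.2 (Real.one_le_exp zero_le_one)).trans (hT1.trans_le hT1k).le) _ _
  have hf_le : ∀ s ∈ Icc (0:ℝ) 1, |f s| ≤ ⨆ s : Icc (0:ℝ) 1, |f s.1| := fun s hs =>
    le_ciSup ⟨_, forall_mem_range.2 fun r : Icc (0:ℝ) 1 =>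
      abs_le_of_eq_intervalIntegral hfd hf r.2⟩ ⟨s, hs⟩
  refine le_iInf fun ⟨t, htk, htk1⟩ => ENNReal.iSup_ofReal_tsub_tsub_le fun ⟨s, hs0, hs1⟩ => ?_
  obtain ⟨s', hs'0, hs's, hts', hgap⟩ := exists_mul_eq_mul_of_le_of_le
    ((Real.exp_pos _).trans (hT1.trans_le hT1k)) htk htk1 hs0 hs1
  refine ⟨⟨s', hs'0, hs's.trans hs1⟩, ?_⟩
  dsimp only
  rw [← hts']
  exact abs_sub_mul_le_of_le hgTk (hgmono hT1k (hT1k.trans htk) htk)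
    (hgmono (hT1k.trans htk) hT1k1 htk1) (hf_le s' ⟨hs'0, hs's.trans hs1⟩)
    ((abs_sub_le_of_eq_intervalIntegral hfd hf hs'0 hs's hs1).trans (by gcongr))

/-- Lemma 2(i) of the paper: for `g(T) = T^{1/α}(log log T)^{δ-1/α}`, an absolutely
continuous `f` with `f 0 = 0` and `f' ∈ L²`, an increasing sequence `T_k` with
`T 1 > e^e` on which `g` is nondecreasing, and ANY function `x`, the infimum over
`T ∈ [T_k, T_{k+1}]` of `sup_{s∈[0,1]} |x(Ts) - f(s)g(T)|` is at least
`sup_s |x(T_k s) - f(s)g(T_k)| - ‖f‖_∞ (g(T_{k+1}) - g(T_k))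
 - ‖f'‖_{L²} (1 - T_k/T_{k+1})^{1/2} g(T_k)`.
Suprema of (possibly unbounded) families are computed in `ℝ≥0∞` via `ENNReal.ofReal`. -/
theorem interpolation_infimum_lower_bound
    (α : ℝ) (hα : α ∈ Ioo (1:ℝ) 2) (δ : ℝ) (hδ : δ ∈ Icc (0:ℝ) 1)
    (g : ℝ → ℝ) (hg : g = fun T => T ^ (1/α) * (Real.log (Real.log T)) ^ (δ - 1/α))
    (fd : ℝ → ℝ) (hfd : MemLp fd 2 (volume.restrict (Icc (0:ℝ) 1)))
    (f : ℝ → ℝ) (hf : ∀ s ∈ Icc (0:ℝ) 1, f s = ∫ u in (0:ℝ)..s, fd u)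
    (T : ℕ → ℝ) (hT : StrictMono T) (hT1 : Real.exp (Real.exp 1) < T 1)
    (hgmono : MonotoneOn g (Ici (T 1)))
    (x : ℝ → ℝ) (k : ℕ) (hk : 1 ≤ k) :
    (⨆ s : Icc (0:ℝ) 1, ENNReal.ofReal |x (T k * s.1) - f s.1 * g (T k)|) -
        ENNReal.ofReal ((⨆ s : Icc (0:ℝ) 1, |f s.1|) * (g (T (k+1)) - g (T k))) -
        ENNReal.ofReal (Real.sqrt (∫ t in Icc (0:ℝ) 1, fd t ^ 2) *
          Real.sqrt (1 - T k / T (k+1)) * g (T k)) ≤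
      ⨅ Tt : Icc (T k) (T (k+1)), ⨆ s : Icc (0:ℝ) 1,
        ENNReal.ofReal |x (Tt.1 * s.1) - f s.1 * g Tt.1| :=
  interpolation_infimum_lower_bound_general α δ g hg fd hfd f hf T hT hT1 hgmono x k hk
end

section
/- Let α ∈ (1,2) and δ ∈ [0,1], and define T_k = exp( k·(log k)^{−3} ) for k ≥ 2. Then: (a) lim_{k→∞} [ T_{k+1}^{1/α}·(log log T_{k+1})^{δ−1/α} − T_k^{1/α}·(log log T_k)^{δ−1/α} ] / ( T_{k+1} / log log T_{k+1} )^{1/α} = 0; (b) lim_{k→∞} (1 − T_k/T_{k+1})^{1/2}·T_k^{1/α}·(log log T_k)^{δ−1/α} / ( T_{k+1} / log log T_{k+1} )^{1/α} = 0; and (c) lim_{k→∞} T_k/T_{k+1} = 1. -/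
/-!
Write `T k = exp (a k)` with `a k = k / (log k)^3`, so that `log log T k = log (a k)`, and let
`Δ k = a (k+1) - a k`. Since `log` increases, `Δ k ≤ (log (k+1))⁻³`; since `x / (log x)³`
increases for `x ≥ e³` (with `s = log x ≥ 3`, `(1 + d/s)³ ≤ exp (3d/s) ≤ exp d`), `Δ k ≥ 0`.
As `log (a (k+1)) ≤ log (k+1)`, we get `Δ k * (log (a (k+1)))² → 0`, which is all that is used
of `a`.
After division by the normaliser, the expression in (a) is
`(log a_{k+1})^δ (1 - exp (-Δ_k/α) (log a_k / log a_{k+1})^{δ-1/α})`, where both factors in the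
bracket are within `Δ_k` of `1`, so it is `O(Δ_k log a_{k+1})`. Since `1 - T_k/T_{k+1} ≤ Δ_k`,
the expression in (b) is `O(√Δ_k log a_{k+1})` and (c) is `1 + O(Δ_k)`.
-/

open Filter Set Topology Real

lemma log_sub_log_le_sub {x y : ℝ} (hx : 1 ≤ x) (hxy : x ≤ y) : log y - log x ≤ y - x := by
  have hx0 : 0 < x := by linarith
  calc log y - log x = log (y / x) := (log_div (by linarith) hx0.ne').symm
    _ ≤ y / x - 1 := log_le_sub_one_of_pos (div_pos (by linarith) hx0)
    _ = (y - x) / x := by field_simp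
    _ ≤ y - x := div_le_self (by linarith) hx

lemma exp_rpow_mul_rpow_div_eq (p δ x y : ℝ) {v w : ℝ} (hv : 0 < v) (hw : 0 < w) :
    exp x ^ p * w ^ (δ - p) / (exp y / v) ^ p =
      exp ((x - y) * p) * (w / v) ^ (δ - p) * v ^ δ := by
  have hvδ : v ^ δ = v ^ (δ - p) * v ^ p := by rw [← rpow_add hv]; ring_nf
  rw [div_rpow (exp_pos y).le hv.le, div_rpow hw.le hv.le, ← exp_mul, ← exp_mul, sub_mul,
    exp_sub, hvδ]
  have := (rpow_pos_of_pos hv p).ne'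
  have := (rpow_pos_of_pos hv (δ - p)).ne'
  field_simp

lemma exp_sub_mul_mem_Icc {p x y : ℝ} (hp : p ∈ Icc (0 : ℝ) 1) (hxy : x ≤ y) :
    exp ((x - y) * p) ∈ Icc (1 - (y - x)) 1 := by
  have hneg : (x - y) * p ≤ 0 := mul_nonpos_of_nonpos_of_nonneg (by linarith) hp.1
  refine ⟨?_, exp_le_one_iff.mpr hneg⟩
  have := add_one_le_exp ((x - y) * p)
  nlinarith [hp.2]

lemma rpow_mem_Icc_self_inv {s e : ℝ} (hs0 : 0 < s) (hs1 : s ≤ 1) (he : e ∈ Icc (-1 : ℝ) 1) :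
    s ^ e ∈ Icc s s⁻¹ := by
  constructor
  · simpa using rpow_le_rpow_of_exponent_ge hs0 hs1 he.2
  · simpa [rpow_neg_one] using rpow_le_rpow_of_exponent_ge hs0 hs1 he.1

lemma one_le_log_of_exp_one_le {x : ℝ} (hx : exp 1 ≤ x) : 1 ≤ log x :=
  (le_log_iff_exp_le (lt_of_lt_of_le (exp_pos 1) hx)).mpr hx

lemma abs_exp_div_exp_sub_one_le {x y : ℝ} (hxy : x ≤ y) : |exp x / exp y - 1| ≤ y - x := by
  rw [← exp_sub, abs_sub_comm,
    abs_of_nonneg (sub_nonneg.mpr (exp_le_one_iff.mpr (by linarith)))]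
  linarith [add_one_le_exp (x - y)]

section

variable {p δ x y : ℝ}

lemma log_div_log_rpow_mem_Icc (hp : p ∈ Icc (0 : ℝ) 1) (hδ : δ ∈ Icc (0 : ℝ) 1)
    (hx : exp 1 ≤ x) (hxy : x ≤ y) :
    (log x / log y) ^ (δ - p) ∈ Icc (1 - (y - x)) (1 + (y - x)) := by
  have hw : 1 ≤ log x := one_le_log_of_exp_one_le hx
  have hwv : log x ≤ log y := log_le_log (by linarith [add_one_le_exp 1]) hxy
  have hvw : log y - log x ≤ y - x := log_sub_log_le_sub (by linarith [add_one_le_exp 1]) hxy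
  obtain ⟨hlow, hup⟩ := rpow_mem_Icc_self_inv (div_pos (by linarith) (by linarith))
    ((div_le_one (by linarith)).mpr hwv)
    (⟨by linarith [hp.2, hδ.1], by linarith [hp.1, hδ.2]⟩ : δ - p ∈ Icc (-1 : ℝ) 1)
  rw [inv_div] at hup
  constructor
  · refine le_trans ?_ hlow
    rw [le_div_iff₀ (by linarith)]
    nlinarith
  · refine hup.trans ?_
    rw [div_le_iff₀ (by linarith)]
    nlinarith

lemma abs_exp_rpow_mul_log_rpow_sub_div_le (hp : p ∈ Icc (0 : ℝ) 1) (hδ : δ ∈ Icc (0 : ℝ) 1)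
    (hx : exp 1 ≤ x) (hxy : x ≤ y) :
    |(exp y ^ p * log y ^ (δ - p) - exp x ^ p * log x ^ (δ - p)) / (exp y / log y) ^ p|
      ≤ 2 * (y - x) * log y := by
  have hw : 1 ≤ log x := one_le_log_of_exp_one_le hx
  have hv : 1 ≤ log y := one_le_log_of_exp_one_le (hx.trans hxy)
  rw [sub_div, exp_rpow_mul_rpow_div_eq p δ y y (by linarith) (by linarith),
    exp_rpow_mul_rpow_div_eq p δ x y (by linarith) (by linarith), sub_self, zero_mul, exp_zero,
    div_self (by linarith), one_rpow, one_mul, one_mul]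
  obtain ⟨hρ_low, hρ_up⟩ := exp_sub_mul_mem_Icc hp hxy
  obtain ⟨hσ_low, hσ_up⟩ := log_div_log_rpow_mem_Icc hp hδ hx hxy
  have hρσ : |1 - exp ((x - y) * p) * (log x / log y) ^ (δ - p)| ≤ 2 * (y - x) := by
    rw [abs_le]
    constructor <;> nlinarith [exp_pos ((x - y) * p)]
  have hvδ : log y ^ δ ≤ log y := by
    simpa using rpow_le_rpow_of_exponent_le hv hδ.2
  rw [← one_sub_mul, abs_mul, abs_of_nonneg (rpow_nonneg (by linarith) δ)]
  calc |1 - exp ((x - y) * p) * (log x / log y) ^ (δ - p)| * log y ^ δ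
      ≤ 2 * (y - x) * log y := by gcongr

lemma sqrt_one_sub_exp_div_mul_rpow_div_le (hp : p ∈ Icc (0 : ℝ) 1) (hδ : δ ∈ Icc (0 : ℝ) 1)
    (hx : exp 1 ≤ x) (hxy : x ≤ y) (hyx : y ≤ x + 1) :
    √(1 - exp x / exp y) * exp x ^ p * log x ^ (δ - p) / (exp y / log y) ^ p
      ≤ 2 * √(y - x) * log y := by
  have hw : 1 ≤ log x := one_le_log_of_exp_one_le hx
  have hv : 1 ≤ log y := one_le_log_of_exp_one_le (hx.trans hxy)
  rw [mul_assoc, mul_div_assoc, exp_rpow_mul_rpow_div_eq p δ x y (by linarith) (by linarith),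
    ← exp_sub]
  have hρ : exp ((x - y) * p) ≤ 1 := (exp_sub_mul_mem_Icc hp hxy).2
  have hσ : (log x / log y) ^ (δ - p) ≤ 2 := by
    linarith [(log_div_log_rpow_mem_Icc hp hδ hx hxy).2]
  have hsqrt : √(1 - exp (x - y)) ≤ √(y - x) :=
    sqrt_le_sqrt (by linarith [add_one_le_exp (x - y)])
  have hvδ : log y ^ δ ≤ log y := by
    simpa using rpow_le_rpow_of_exponent_le hv hδ.2
  calc √(1 - exp (x - y)) * (exp ((x - y) * p) * (log x / log y) ^ (δ - p) * log y ^ δ)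
      ≤ √(y - x) * (1 * 2 * log y) := by gcongr
    _ = 2 * √(y - x) * log y := by ring

end

section

variable {a : ℕ → ℝ}

lemma tendsto_sub_mul_log_pow {m : ℕ} (hm : m ≤ 2) (h_large : ∀ᶠ k in atTop, exp 1 ≤ a k)
    (h_mono : ∀ᶠ k in atTop, a k ≤ a (k + 1))
    (h_gap : Tendsto (fun k => (a (k + 1) - a k) * log (a (k + 1)) ^ 2) atTop (𝓝 0)) :
    Tendsto (fun k => (a (k + 1) - a k) * log (a (k + 1)) ^ m) atTop (𝓝 0) := by
  refine squeeze_zero' ?_ ?_ h_gap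
  · filter_upwards [h_mono, h_large] with k hk hk'
    have := one_le_log_of_exp_one_le (hk'.trans hk)
    positivity
  · filter_upwards [h_mono, h_large] with k hk hk'
    gcongr
    exact one_le_log_of_exp_one_le (hk'.trans hk)

theorem tendsto_exp_div_exp_succ (h_mono : ∀ᶠ k in atTop, a k ≤ a (k + 1))
    (h_lim : Tendsto (fun k => a (k + 1) - a k) atTop (𝓝 0)) :
    Tendsto (fun k => exp (a k) / exp (a (k + 1))) atTop (𝓝 1) := by
  rw [← tendsto_sub_nhds_zero_iff]
  refine squeeze_zero_norm' ?_ h_lim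
  filter_upwards [h_mono] with k hk
  exact abs_exp_div_exp_sub_one_le hk

variable {p δ : ℝ}

theorem tendsto_exp_rpow_mul_log_rpow_sub_div (hp : p ∈ Icc (0 : ℝ) 1) (hδ : δ ∈ Icc (0 : ℝ) 1)
    (h_large : ∀ᶠ k in atTop, exp 1 ≤ a k) (h_mono : ∀ᶠ k in atTop, a k ≤ a (k + 1))
    (h_lim : Tendsto (fun k => (a (k + 1) - a k) * log (a (k + 1))) atTop (𝓝 0)) :
    Tendsto (fun k => (exp (a (k + 1)) ^ p * log (a (k + 1)) ^ (δ - p) -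
        exp (a k) ^ p * log (a k) ^ (δ - p)) / (exp (a (k + 1)) / log (a (k + 1))) ^ p)
      atTop (𝓝 0) := by
  refine squeeze_zero_norm' ?_ (by simpa using h_lim.const_mul 2)
  filter_upwards [h_large, h_mono] with k hk hk'
  rw [norm_eq_abs, ← mul_assoc]
  exact abs_exp_rpow_mul_log_rpow_sub_div_le hp hδ hk hk'

theorem tendsto_sqrt_one_sub_exp_div_mul_rpow_div (hp : p ∈ Icc (0 : ℝ) 1)
    (hδ : δ ∈ Icc (0 : ℝ) 1) (h_large : ∀ᶠ k in atTop, exp 1 ≤ a k)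
    (h_mono : ∀ᶠ k in atTop, a k ≤ a (k + 1))
    (h_lim : Tendsto (fun k => a (k + 1) - a k) atTop (𝓝 0))
    (h_gap : Tendsto (fun k => (a (k + 1) - a k) * log (a (k + 1)) ^ 2) atTop (𝓝 0)) :
    Tendsto (fun k => √(1 - exp (a k) / exp (a (k + 1))) * exp (a k) ^ p *
        log (a k) ^ (δ - p) / (exp (a (k + 1)) / log (a (k + 1))) ^ p) atTop (𝓝 0) := by
  have h_sqrt := ((continuous_sqrt.tendsto 0).comp h_gap).const_mul 2
  rw [sqrt_zero, mul_zero] at h_sqrt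
  refine squeeze_zero' ?_ ?_ h_sqrt
  · filter_upwards [h_large, h_mono] with k hk hk'
    have hw := one_le_log_of_exp_one_le hk
    have hv := one_le_log_of_exp_one_le (hk.trans hk')
    exact div_nonneg (mul_nonneg (by positivity) (rpow_nonneg (by linarith) _))
      (rpow_nonneg (div_nonneg (exp_pos _).le (by linarith)) _)
  · filter_upwards [h_large, h_mono, h_lim.eventually (Iic_mem_nhds one_pos)]
      with k hk hk' hk''
    have := one_le_log_of_exp_one_le (hk.trans hk')
    rw [Function.comp_apply, sqrt_mul (by linarith), sqrt_sq (by linarith), ← mul_assoc]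
    exact sqrt_one_sub_exp_div_mul_rpow_div_le hp hδ hk hk' (by simp at hk''; linarith)

end

lemma pow_le_pow_mul_exp_sub {n : ℕ} {s t : ℝ} (hn : (n : ℝ) ≤ s) (hs : 0 < s) (hst : s ≤ t) :
    t ^ n ≤ s ^ n * exp (t - s) := by
  have h_ratio : t / s ≤ exp ((t - s) / s) := by
    rw [sub_div, div_self hs.ne']
    linarith [add_one_le_exp (t / s - 1)]
  have h_exp : n * ((t - s) / s) ≤ t - s := by
    rw [← mul_div_assoc, div_le_iff₀ hs]
    nlinarith
  calc t ^ n = s ^ n * (t / s) ^ n := by rw [div_pow]; field_simp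
    _ ≤ s ^ n * exp ((t - s) / s) ^ n := by gcongr; exact div_nonneg (by linarith) hs.le
    _ = s ^ n * exp (n * ((t - s) / s)) := by rw [← exp_nat_mul]
    _ ≤ s ^ n * exp (t - s) := by gcongr

lemma monotoneOn_div_log_pow (n : ℕ) : MonotoneOn (fun x => x / log x ^ n) (Ici (exp n)) := by
  rcases Nat.eq_zero_or_pos n with rfl | hn
  · intro x _ y _ hxy
    simpa using hxy
  intro x hx y hy hxy
  have hx0 : 0 < x := lt_of_lt_of_le (exp_pos _) hx
  have hs : (n : ℝ) ≤ log x := (le_log_iff_exp_le hx0).mpr hx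
  have hs0 : 0 < log x := lt_of_lt_of_le (by exact_mod_cast hn) hs
  have hst : log x ≤ log y := log_le_log hx0 hxy
  have key := pow_le_pow_mul_exp_sub hs hs0 hst
  rw [exp_sub, exp_log hx0, exp_log (hx0.trans_le hxy)] at key
  simp only
  rw [div_le_div_iff₀ (pow_pos hs0 n) (pow_pos (hs0.trans_le hst) n)]
  calc x * log y ^ n ≤ x * (log x ^ n * (y / x)) := by gcongr
    _ = y * log x ^ n := by field_simp

lemma div_log_pow_sub_div_log_pow_le (n : ℕ) {x y : ℝ} (hx : 1 < x) (hxy : x ≤ y) :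
    y / log y ^ n - x / log x ^ n ≤ (y - x) / log y ^ n := by
  have hlx : 0 < log x := log_pos hx
  have : x / log y ^ n ≤ x / log x ^ n :=
    div_le_div_of_nonneg_left (by linarith) (by positivity) (by gcongr)
  rw [sub_div]
  linarith

lemma log_div_log_pow_le (n : ℕ) {x : ℝ} (hx : exp 1 ≤ x) : log (x / log x ^ n) ≤ log x := by
  have hx0 : 0 < x := lt_of_lt_of_le (exp_pos 1) hx
  have hl : 1 ≤ log x := one_le_log_of_exp_one_le hx
  exact log_le_log (div_pos hx0 (by positivity)) (div_le_self hx0.le (one_le_pow₀ hl))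

lemma tendsto_div_log_pow_atTop (n : ℕ) : Tendsto (fun x => x / log x ^ n) atTop atTop := by
  refine ((tendsto_exp_div_pow_atTop n).comp tendsto_log_atTop).congr' ?_
  filter_upwards [eventually_gt_atTop 0] with x hx
  simp [exp_log hx]

lemma eventually_div_log_pow_le_succ (n : ℕ) :
    ∀ᶠ k : ℕ in atTop, (k : ℝ) / log k ^ n ≤ ((k + 1 : ℕ) : ℝ) / log ((k + 1 : ℕ) : ℝ) ^ n := by
  filter_upwards [tendsto_natCast_atTop_atTop.eventually_ge_atTop (exp n)] with k hk
  exact monotoneOn_div_log_pow n hk (mem_Ici.mpr (by push_cast; linarith))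
    (by push_cast; linarith)

lemma tendsto_div_log_cube_succ_sub_mul_log_sq :
    Tendsto (fun k : ℕ =>
      (((k + 1 : ℕ) : ℝ) / log ((k + 1 : ℕ) : ℝ) ^ 3 - (k : ℝ) / log k ^ 3) *
        log (((k + 1 : ℕ) : ℝ) / log ((k + 1 : ℕ) : ℝ) ^ 3) ^ 2) atTop (𝓝 0) := by
  have h_inv : Tendsto (fun k : ℕ => (log ((k + 1 : ℕ) : ℝ))⁻¹) atTop (𝓝 0) :=
    tendsto_inv_atTop_zero.comp (tendsto_log_atTop.comp
      (tendsto_natCast_atTop_atTop.comp (tendsto_add_atTop_nat 1)))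
  refine squeeze_zero' ?_ ?_ h_inv
  · filter_upwards [eventually_div_log_pow_le_succ 3] with k hk
    exact mul_nonneg (by linarith) (sq_nonneg _)
  · have h_succ : Tendsto (fun k : ℕ => ((k + 1 : ℕ) : ℝ)) atTop atTop :=
      tendsto_natCast_atTop_atTop.comp (tendsto_add_atTop_nat 1)
    filter_upwards [eventually_div_log_pow_le_succ 3,
      tendsto_natCast_atTop_atTop.eventually_ge_atTop (exp 3),
      ((tendsto_div_log_pow_atTop 3).comp h_succ).eventually_ge_atTop (exp 1)]
      with k h_mono hk hk'
    simp only [Function.comp_apply] at hk'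
    have hk1 : exp 1 ≤ (k : ℝ) := (exp_le_exp.mpr (by norm_num)).trans hk
    have hl : 1 ≤ log ((k + 1 : ℕ) : ℝ) := one_le_log_of_exp_one_le (by push_cast; linarith)
    have h_gap := div_log_pow_sub_div_log_pow_le 3
      (by linarith [add_one_le_exp 1] : 1 < (k : ℝ))
      (by push_cast; linarith : (k : ℝ) ≤ (k + 1 : ℕ))
    have h_log := log_div_log_pow_le 3 (by push_cast; linarith : exp 1 ≤ ((k + 1 : ℕ) : ℝ))
    have h_log_nonneg := one_le_log_of_exp_one_le hk'
    push_cast at h_mono hl h_gap h_log h_log_nonneg ⊢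
    rw [add_sub_cancel_left] at h_gap
    calc _ ≤ 1 / log ((k : ℝ) + 1) ^ 3 * log ((k : ℝ) + 1) ^ 2 :=
          mul_le_mul h_gap (pow_le_pow_left₀ (by linarith) h_log 2) (sq_nonneg _) (by positivity)
      _ = (log ((k : ℝ) + 1))⁻¹ := by field_simp

/-- Lemma 2(ii) of the paper, for `T_k = exp(k (log k)^{-3})` and `α ∈ (1,2)`,
`δ ∈ [0,1]`:
(a) `(T_{k+1}^{1/α}(log log T_{k+1})^{δ-1/α} - T_k^{1/α}(log log T_k)^{δ-1/α})
      / (T_{k+1}/log log T_{k+1})^{1/α} → 0`;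
(b) `(1 - T_k/T_{k+1})^{1/2} T_k^{1/α} (log log T_k)^{δ-1/α}
      / (T_{k+1}/log log T_{k+1})^{1/α} → 0`;
(c) `T_k/T_{k+1} → 1`. -/
theorem technical_sequence_limits
    (α : ℝ) (hα : α ∈ Ioo (1:ℝ) 2) (δ : ℝ) (hδ : δ ∈ Icc (0:ℝ) 1)
    (T : ℕ → ℝ) (hT : ∀ k : ℕ, T k = Real.exp ((k : ℝ) / (Real.log (k : ℝ)) ^ 3)) :
    Tendsto (fun k : ℕ =>
        (T (k+1) ^ (1/α) * (Real.log (Real.log (T (k+1)))) ^ (δ - 1/α) -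
          T k ^ (1/α) * (Real.log (Real.log (T k))) ^ (δ - 1/α)) /
          (T (k+1) / Real.log (Real.log (T (k+1)))) ^ (1/α)) atTop (𝓝 0) ∧
      Tendsto (fun k : ℕ =>
        Real.sqrt (1 - T k / T (k+1)) * T k ^ (1/α) *
          (Real.log (Real.log (T k))) ^ (δ - 1/α) /
          (T (k+1) / Real.log (Real.log (T (k+1)))) ^ (1/α)) atTop (𝓝 0) ∧
      Tendsto (fun k : ℕ => T k / T (k+1)) atTop (𝓝 1) := by
  set a : ℕ → ℝ := fun k => (k : ℝ) / log k ^ 3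
  obtain rfl : T = fun k => exp (a k) := funext hT
  simp only [log_exp]
  have hα0 : 0 < α := by linarith [hα.1]
  have hp : 1 / α ∈ Icc (0 : ℝ) 1 := ⟨(one_div_pos.mpr hα0).le, (div_le_one₀ hα0).mpr hα.1.le⟩
  have h_large : ∀ᶠ k in atTop, exp 1 ≤ a k :=
    ((tendsto_div_log_pow_atTop 3).comp tendsto_natCast_atTop_atTop).eventually_ge_atTop _
  have h_mono : ∀ᶠ k in atTop, a k ≤ a (k + 1) := eventually_div_log_pow_le_succ 3
  have h_gap : Tendsto (fun k => (a (k + 1) - a k) * log (a (k + 1)) ^ 2) atTop (𝓝 0) :=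
    tendsto_div_log_cube_succ_sub_mul_log_sq
  have h_lim : Tendsto (fun k => a (k + 1) - a k) atTop (𝓝 0) := by
    simpa using tendsto_sub_mul_log_pow (m := 0) (by norm_num) h_large h_mono h_gap
  refine ⟨tendsto_exp_rpow_mul_log_rpow_sub_div hp hδ h_large h_mono ?_,
    tendsto_sqrt_one_sub_exp_div_mul_rpow_div hp hδ h_large h_mono h_lim h_gap,
    tendsto_exp_div_exp_succ h_mono h_lim⟩
  simpa using tendsto_sub_mul_log_pow (m := 1) (by norm_num) h_large h_mono h_gap
end

section
/- Let α ∈ (1,2), r > 0, and let b : [0,1] → ℝ be measurable with |b(t)| < 1 for almost every t ∈ [0,1]. Define Ψ(u) = (1+u)·log(1+u) − u for u > −1. Then ∫₀¹ ∫_{−r}^{r} Ψ( b(t)·x/r ) · |x|^{−1−α} dx dt = (2/r^α) · Σ_{k=1}^∞ [ ∫₀¹ b(t)^{2k} dt ] / ( 2k·(2k−1)·(2k−α) ); in particular, when |b(t)| ≤ 1 a.e. this double integral is at most (2/r^α)·Σ_{k=1}^∞ 1/(2k(2k−1)(2k−α)). -/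
open MeasureTheory Filter Set Topology

noncomputable section

/-!
For `|u| < 1` the even part of `Ψ` has a power series with positive coefficients,
`Ψ(u) + Ψ(-u) = (1 + u) log (1 + u) + (1 - u) log (1 - u) = ∑_{k ≥ 1} 2 u^{2k} / (2k (2k - 1))`,
obtained from the series of `log (1 + u) - log (1 - u)` and of `log (1 - u²)`.
Folding `[-r, r]` onto `(0, r]`, the inner integral becomes a series of power integrals
`∫₀^r x^{2k-1-α} dx = r^{2k-α} / (2k - α)`, and both the `x`- and the `t`-integral may be
exchanged with the sum because the coefficients are `O(k⁻³)` and `|b| ≤ 1`.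
The integrand is integrable near `0` since `0 ≤ Ψ(u) ≤ u²` and `α < 2`.
-/

def psi (u : ℝ) : ℝ := (1 + u) * Real.log (1 + u) - u

lemma continuous_psi : Continuous psi :=
  (Real.continuous_mul_log.comp (continuous_const.add continuous_id)).sub continuous_id

lemma psi_nonneg {u : ℝ} (hu : -1 < u) : 0 ≤ psi u := by
  have h : 0 < 1 + u := by linarith
  have := mul_le_mul_of_nonneg_left (Real.one_sub_inv_le_log_of_pos h) h.le
  rw [mul_sub, mul_inv_cancel₀ h.ne'] at this
  unfold psi
  linarith

lemma psi_le_sq {u : ℝ} (hu : -1 < u) : psi u ≤ u ^ 2 := by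
  have h : 0 < 1 + u := by linarith
  have := mul_le_mul_of_nonneg_left (Real.log_le_sub_one_of_pos h) h.le
  unfold psi
  nlinarith

lemma abs_psi_le_sq {u : ℝ} (hu : -1 < u) : |psi u| ≤ u ^ 2 := by
  rw [abs_of_nonneg (psi_nonneg hu)]
  exact psi_le_sq hu

lemma hasSum_psi_add_psi_neg {u : ℝ} (hu : |u| < 1) :
    HasSum (fun k : ℕ => 2 * u ^ (2 * (k + 1)) / (2 * ((k : ℝ) + 1) * (2 * ((k : ℝ) + 1) - 1)))
      (psi u + psi (-u)) := by
  have hodd := Real.hasSum_log_sub_log_of_abs_lt_one hu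
  have heven := Real.hasSum_pow_div_log_of_abs_lt_one (x := u ^ 2)
    (by rw [abs_pow]; exact pow_lt_one₀ (abs_nonneg u) hu two_ne_zero)
  obtain ⟨hu₁, hu₂⟩ := abs_lt.1 hu
  have hlog : Real.log (1 - u ^ 2) = Real.log (1 + u) + Real.log (1 - u) := by
    rw [← Real.log_mul (by linarith) (by linarith)]
    ring_nf
  have hsum := (hodd.mul_left u).sub heven
  rw [hlog, show u * (Real.log (1 + u) - Real.log (1 - u)) - -(Real.log (1 + u) + Real.log (1 - u))
    = psi u + psi (-u) by simp only [psi, ← sub_eq_add_neg]; ring] at hsum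
  refine hsum.congr_fun fun k => ?_
  have : (2 * (k : ℝ) + 1) ≠ 0 := by positivity
  rw [show 2 * ((k : ℝ) + 1) - 1 = 2 * k + 1 by ring]
  field_simp
  ring

def psiSeriesDenom (α : ℝ) (k : ℕ) : ℝ :=
  2 * ((k : ℝ) + 1) * (2 * ((k : ℝ) + 1) - 1) * (2 * ((k : ℝ) + 1) - α)

lemma sq_mul_le_psiSeriesDenom {α : ℝ} (hα : α < 2) (k : ℕ) :
    ((k : ℝ) + 1) ^ 2 * (2 - α) ≤ psiSeriesDenom α k := by
  have hk : (0 : ℝ) ≤ k := k.cast_nonneg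
  unfold psiSeriesDenom
  gcongr <;> nlinarith

lemma psiSeriesDenom_pos {α : ℝ} (hα : α < 2) (k : ℕ) : 0 < psiSeriesDenom α k :=
  lt_of_lt_of_le (by have := sub_pos.2 hα; positivity) (sq_mul_le_psiSeriesDenom hα k)

lemma summable_inv_psiSeriesDenom {α : ℝ} (hα : α < 2) :
    Summable fun k => (psiSeriesDenom α k)⁻¹ := by
  have hsq : Summable fun k : ℕ => (((k : ℝ) + 1) ^ 2 * (2 - α))⁻¹ := by
    have := (summable_nat_add_iff 1).2 (Real.summable_one_div_nat_pow.2 one_lt_two)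
    simpa [mul_inv, mul_comm] using this.mul_right (2 - α)⁻¹
  exact hsq.of_nonneg_of_le (fun k => inv_nonneg.2 (psiSeriesDenom_pos hα k).le)
    fun k => inv_anti₀ (by have := sub_pos.2 hα; positivity) (sq_mul_le_psiSeriesDenom hα k)

lemma summable_div_psiSeriesDenom {α : ℝ} (hα : α < 2) {a : ℕ → ℝ} (ha : ∀ k, |a k| ≤ 1) :
    Summable fun k => a k / psiSeriesDenom α k :=
  (summable_inv_psiSeriesDenom hα).of_norm_bounded fun k => by
    rw [Real.norm_eq_abs, abs_div, abs_of_pos (psiSeriesDenom_pos hα k), div_eq_inv_mul]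
    exact mul_le_of_le_one_right (inv_nonneg.2 (psiSeriesDenom_pos hα k).le) (ha k)

lemma abs_mul_div_lt_one {c x r : ℝ} (hr : 0 < r) (hc : |c| < 1) (hx : |x| ≤ r) :
    |c * x / r| < 1 := by
  rw [abs_div, abs_mul, abs_of_pos hr, div_lt_one hr]
  nlinarith [abs_nonneg c, abs_nonneg x]

lemma intervalIntegrable_abs_rpow {s : ℝ} (hs : -1 < s) (a b : ℝ) :
    IntervalIntegrable (fun x => |x| ^ s) volume a b :=
  intervalIntegrable_of_even (fun x => by rw [abs_neg]) fun y hy =>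
    (intervalIntegral.intervalIntegrable_rpow' hs).congr_uIoo fun x hx => by
      rw [uIoo_of_le hy.le] at hx
      simp only [abs_of_pos hx.1]

lemma abs_psi_mul_abs_rpow_le {α c r x : ℝ} (hr : 0 < r) (hc : |c| < 1) (hx : |x| ≤ r) :
    |psi (c * x / r) * |x| ^ (-1 - α)| ≤ (c / r) ^ 2 * |x| ^ (1 - α) := by
  rcases eq_or_ne x 0 with rfl | hx₀
  · simp [psi]
    positivity
  have hpsi := abs_psi_le_sq (neg_lt_of_abs_lt (abs_mul_div_lt_one hr hc hx))
  calc |psi (c * x / r) * |x| ^ (-1 - α)| ≤ (c * x / r) ^ 2 * |x| ^ (-1 - α) := by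
        rw [abs_mul, abs_of_nonneg (Real.rpow_nonneg (abs_nonneg x) _)]
        gcongr
    _ = (c / r) ^ 2 * |x| ^ (1 - α) := by
        rw [show 1 - α = 2 + (-1 - α) by ring, Real.rpow_add (abs_pos.2 hx₀), Real.rpow_two,
          sq_abs]
        ring

lemma intervalIntegrable_psi_mul_abs_rpow {α c r : ℝ} (hα : α < 2) (hr : 0 < r) (hc : |c| < 1) :
    IntervalIntegrable (fun x => psi (c * x / r) * |x| ^ (-1 - α)) volume (-r) r := by
  refine ((intervalIntegrable_abs_rpow (s := 1 - α) (by linarith) _ _).const_mul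
    ((c / r) ^ 2)).mono_fun' ?_ ?_
  · exact ((continuous_psi.comp (by fun_prop)).measurable.mul
      (continuous_abs.measurable.pow_const _)).aestronglyMeasurable
  · refine ae_restrict_of_forall_mem measurableSet_uIoc fun x hx => ?_
    rw [uIoc_of_le (by linarith)] at hx
    exact abs_psi_mul_abs_rpow_le hr hc (abs_le.2 ⟨hx.1.le, hx.2⟩)

lemma intervalIntegral_neg_eq_setIntegral_Ioc_add {E : Type*} [NormedAddCommGroup E]
    [NormedSpace ℝ E] {f : ℝ → E} {r : ℝ} (hr : 0 ≤ r) (hf : IntervalIntegrable f volume (-r) r) :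
    ∫ x in (-r)..r, f x = ∫ x in Ioc 0 r, (f x + f (-x)) := by
  have hleft : IntervalIntegrable f volume (-r) 0 :=
    hf.mono_set (by simpa [hr] using Icc_subset_Icc_right hr)
  have hright : IntervalIntegrable f volume 0 r :=
    hf.mono_set (by simpa [hr] using Icc_subset_Icc_left (neg_nonpos.2 hr))
  have hright' : IntervalIntegrable (fun x => f (-x)) volume 0 r := by
    simpa using ((IntervalIntegrable.iff_comp_neg).1 hleft).symm
  rw [← intervalIntegral.integral_add_adjacent_intervals hleft hright,
    ← intervalIntegral.integral_of_le hr, intervalIntegral.integral_add hright hright',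
    add_comm, ← neg_zero, ← intervalIntegral.integral_comp_neg, neg_zero]

lemma eqOn_pow_mul_abs_rpow (α c r : ℝ) (n : ℕ) :
    EqOn (fun x => (c * x / r) ^ n * |x| ^ (-1 - α))
      (fun x => (c / r) ^ n * x ^ ((n : ℝ) - 1 - α)) (Ioi 0) := fun x hx => by
  dsimp only
  rw [abs_of_pos hx, sub_sub, sub_eq_add_neg (n : ℝ), Real.rpow_add hx, Real.rpow_natCast,
    neg_add']
  ring

lemma integrableOn_pow_mul_abs_rpow {α r : ℝ} (c : ℝ) {n : ℕ} (hr : 0 < r) (hn : α < n) :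
    IntegrableOn (fun x => (c * x / r) ^ n * |x| ^ (-1 - α)) (Ioc 0 r) := by
  rw [integrableOn_congr_fun ((eqOn_pow_mul_abs_rpow α c r n).mono Ioc_subset_Ioi_self)
    measurableSet_Ioc, ← intervalIntegrable_iff_integrableOn_Ioc_of_le hr.le]
  exact (intervalIntegral.intervalIntegrable_rpow' (by linarith)).const_mul _

lemma integral_pow_mul_abs_rpow {α r : ℝ} (c : ℝ) {n : ℕ} (hr : 0 < r) (hn : α < n) :
    ∫ x in Ioc 0 r, (c * x / r) ^ n * |x| ^ (-1 - α) = c ^ n / (r ^ α * (n - α)) := by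
  rw [setIntegral_congr_fun measurableSet_Ioc
      ((eqOn_pow_mul_abs_rpow α c r n).mono Ioc_subset_Ioi_self), integral_const_mul,
    ← intervalIntegral.integral_of_le hr.le, integral_rpow (Or.inl (by linarith)),
    Real.zero_rpow (by linarith), sub_zero, show (n : ℝ) - 1 - α + 1 = n - α by ring,
    Real.rpow_sub hr, Real.rpow_natCast, div_pow]
  have : (n : ℝ) - α ≠ 0 := by linarith
  field_simp

theorem integral_psi_mul_abs_rpow {α c r : ℝ} (hα : α < 2) (hr : 0 < r) (hc : |c| < 1) :
    ∫ x in (-r)..r, psi (c * x / r) * |x| ^ (-1 - α) =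
      2 / r ^ α * ∑' k : ℕ, c ^ (2 * (k + 1)) / psiSeriesDenom α k := by
  set F : ℕ → ℝ → ℝ := fun k x => 2 / (2 * ((k : ℝ) + 1) * (2 * ((k : ℝ) + 1) - 1)) *
    ((c * x / r) ^ (2 * (k + 1)) * |x| ^ (-1 - α))
  have hn (k : ℕ) : α < ((2 * (k + 1) : ℕ) : ℝ) := by push_cast; linarith [k.cast_nonneg (α := ℝ)]
  have hF_sum : ∀ x ∈ Ioc 0 r,
      psi (c * x / r) * |x| ^ (-1 - α) + psi (c * -x / r) * |-x| ^ (-1 - α) = ∑' k, F k x := by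
    intro x hx
    have hu := abs_mul_div_lt_one hr hc (abs_le.2 ⟨by linarith [hx.1], hx.2⟩)
    rw [abs_neg, ← add_mul, mul_neg, neg_div, ← ((hasSum_psi_add_psi_neg hu).mul_right _).tsum_eq]
    congr with k
    ring
  have hF_int (k : ℕ) : Integrable (F k) (volume.restrict (Ioc 0 r)) :=
    (integrableOn_pow_mul_abs_rpow c hr (hn k)).const_mul _
  have hF_integral (k : ℕ) :
      ∫ x in Ioc 0 r, F k x = 2 / r ^ α * (c ^ (2 * (k + 1)) / psiSeriesDenom α k) := by
    have h₁ : 2 * ((k : ℝ) + 1) - 1 ≠ 0 := by linarith [k.cast_nonneg (α := ℝ)]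
    have h₂ : 2 * ((k : ℝ) + 1) - α ≠ 0 := by linarith [k.cast_nonneg (α := ℝ)]
    have h₃ : r ^ α ≠ 0 := by positivity
    rw [integral_const_mul, integral_pow_mul_abs_rpow c hr (hn k), psiSeriesDenom]
    push_cast
    field_simp
  have hF_nonneg (k : ℕ) (x : ℝ) : 0 ≤ F k x := by
    have : 0 < 2 * ((k : ℝ) + 1) - 1 := by linarith [k.cast_nonneg (α := ℝ)]
    have := (even_two_mul (k + 1)).pow_nonneg (c * x / r)
    positivity
  have hF_summable : Summable fun k => ∫ x in Ioc 0 r, ‖F k x‖ := by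
    simp_rw [Real.norm_of_nonneg (hF_nonneg _ _), hF_integral]
    refine (summable_div_psiSeriesDenom hα fun k => ?_).mul_left _
    rw [abs_pow]
    exact pow_le_one₀ (abs_nonneg c) hc.le
  rw [intervalIntegral_neg_eq_setIntegral_Ioc_add hr.le
      (intervalIntegrable_psi_mul_abs_rpow hα hr hc),
    setIntegral_congr_fun measurableSet_Ioc hF_sum,
    ← integral_tsum_of_summable_integral_norm hF_int hF_summable]
  simp_rw [hF_integral]
  exact tsum_mul_left

lemma integral_tsum_div_of_abs_le_one {Ω : Type*} [MeasurableSpace Ω] {μ : Measure Ω}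
    [IsFiniteMeasure μ] {g : ℕ → Ω → ℝ} {d : ℕ → ℝ} (hd : Summable fun k => (d k)⁻¹)
    (hg : ∀ k, AEStronglyMeasurable (g k) μ) (hg_le : ∀ k, ∀ᵐ t ∂μ, |g k t| ≤ 1) :
    ∫ t, ∑' k, g k t / d k ∂μ = ∑' k, (∫ t, g k t ∂μ) / d k := by
  have hint (k : ℕ) : Integrable (fun t => g k t / d k) μ :=
    (Integrable.of_bound (hg k) 1 (hg_le k)).div_const _
  have hnorm (k : ℕ) : ∫ t, ‖g k t / d k‖ ∂μ ≤ |(d k)⁻¹| * μ.real univ := by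
    refine (Real.le_norm_self _).trans
      (norm_integral_le_of_norm_le_const ((hg_le k).mono fun t ht => ?_))
    rw [norm_norm, Real.norm_eq_abs, div_eq_inv_mul, abs_mul]
    exact mul_le_of_le_one_right (abs_nonneg _) ht
  rw [← integral_tsum_of_summable_integral_norm hint <|
    ((summable_abs_iff.2 hd).mul_right _).of_nonneg_of_le
      (fun k => integral_nonneg fun _ => norm_nonneg _) hnorm]
  simp_rw [integral_div]

/-- For `Ψ(u) = (1+u)log(1+u) - u`, `α ∈ (1,2)`, `r > 0` and measurable `b` with
`|b(t)| < 1` a.e. on `[0,1]`: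
`∫₀¹∫_{-r}^{r} Ψ(b(t)x/r)|x|^{-1-α} dx dt
   = (2/r^α) Σ_k (∫₀¹ b(t)^{2k} dt)/(2k(2k-1)(2k-α))`,
and in particular the double integral is at most
`(2/r^α) Σ_k 1/(2k(2k-1)(2k-α))`. -/
theorem psi_double_integral_series
    (α : ℝ) (hα : α ∈ Ioo (1:ℝ) 2) (r : ℝ) (hr : 0 < r)
    (b : ℝ → ℝ) (hb : Measurable b)
    (hb1 : ∀ᵐ t ∂(volume.restrict (Icc (0:ℝ) 1)), |b t| < 1)
    (Ψ : ℝ → ℝ) (hΨ : ∀ u : ℝ, -1 < u → Ψ u = (1 + u) * Real.log (1 + u) - u) :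
    (∫ t in Icc (0:ℝ) 1, ∫ x in (-r)..r, Ψ (b t * x / r) * |x| ^ (-1 - α)) =
      (2 / r ^ α) * ∑' k : ℕ,
        (∫ t in Icc (0:ℝ) 1, b t ^ (2 * (k + 1))) /
          (2 * ((k:ℝ) + 1) * (2 * ((k:ℝ) + 1) - 1) * (2 * ((k:ℝ) + 1) - α)) ∧
    (∫ t in Icc (0:ℝ) 1, ∫ x in (-r)..r, Ψ (b t * x / r) * |x| ^ (-1 - α)) ≤
      (2 / r ^ α) * ∑' k : ℕ,
        1 / (2 * ((k:ℝ) + 1) * (2 * ((k:ℝ) + 1) - 1) * (2 * ((k:ℝ) + 1) - α)) := by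
  have hpow (k : ℕ) : ∀ᵐ t ∂(volume.restrict (Icc (0:ℝ) 1)), |b t ^ (2 * (k + 1))| ≤ 1 :=
    hb1.mono fun t ht => by rw [abs_pow]; exact pow_le_one₀ (abs_nonneg _) ht.le
  have hinner : (fun t => ∫ x in (-r)..r, Ψ (b t * x / r) * |x| ^ (-1 - α))
      =ᵐ[volume.restrict (Icc (0:ℝ) 1)]
        fun t => 2 / r ^ α * ∑' k : ℕ, b t ^ (2 * (k + 1)) / psiSeriesDenom α k := by
    filter_upwards [hb1] with t ht
    rw [← integral_psi_mul_abs_rpow hα.2 hr ht]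
    refine intervalIntegral.integral_congr fun x hx => ?_
    rw [uIcc_of_le (by linarith)] at hx
    rw [hΨ _ (neg_lt_of_abs_lt (abs_mul_div_lt_one hr ht (abs_le.2 hx))), psi]
  have hmain : (∫ t in Icc (0:ℝ) 1, ∫ x in (-r)..r, Ψ (b t * x / r) * |x| ^ (-1 - α)) =
      2 / r ^ α * ∑' k : ℕ, (∫ t in Icc (0:ℝ) 1, b t ^ (2 * (k + 1))) / psiSeriesDenom α k := by
    rw [integral_congr_ae hinner, integral_const_mul, integral_tsum_div_of_abs_le_one
      (summable_inv_psiSeriesDenom hα.2) (fun k => (hb.pow_const _).aestronglyMeasurable) hpow]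
  have hint_le (k : ℕ) : |∫ t in Icc (0:ℝ) 1, b t ^ (2 * (k + 1))| ≤ 1 := by
    simpa using norm_integral_le_of_norm_le_const (f := fun t => b t ^ (2 * (k + 1))) (hpow k)
  refine ⟨hmain, hmain ▸ mul_le_mul_of_nonneg_left ?_ (by positivity)⟩
  exact Summable.tsum_le_tsum
    (fun k => div_le_div_of_nonneg_right ((le_abs_self _).trans (hint_le k))
      (psiSeriesDenom_pos hα.2 k).le)
    (summable_div_psiSeriesDenom hα.2 hint_le) (summable_div_psiSeriesDenom hα.2 fun _ => by simp)
end
end
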